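/- arXiv:2106.01019 — 2 statements merged into one kernel-verified Lean document; each statement's English description precedes it below -/
import Mathlib

section
/- For every natural number n ≥ 2, 1 - (1 - 1/(n-1))^n - n·(1/(n-1))·(1 - 1/(n-1))^(n-1) ≥ 1 - 2/e. -/
/-! With `m = n - 1` and `p = 1/m`, the two subtracted terms are `(1-p)^m` times `(1-p)` and
`(m+1)p = 1 + p`, which add up to `2 (1-p)^m`; and `(1 - 1/m)^m ≤ exp (-1)`. -/

open Real

lemma one_sub_inv_pow_le_exp_neg_one {m : ℕ} (hm : 1 ≤ m) :
    (1 - 1 / (m : ℝ)) ^ m ≤ exp (-1) :=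
  one_sub_div_pow_le_exp_neg (by exact_mod_cast hm)

lemma one_sub_inv_pow_succ_add_binomial_term {m : ℕ} (hm : m ≠ 0) :
    (1 - 1 / (m : ℝ)) ^ (m + 1) + ((m + 1 : ℕ) : ℝ) * (1 / (m : ℝ)) * (1 - 1 / (m : ℝ)) ^ m
      = 2 * (1 - 1 / (m : ℝ)) ^ m := by
  have hm' : (m : ℝ) ≠ 0 := Nat.cast_ne_zero.mpr hm
  rw [pow_succ]
  push_cast
  field_simp
  ring

theorem stmt_4 (n : ℕ) (hn : 2 ≤ n) :
    1 - (1 - 1 / ((n : ℝ) - 1)) ^ n - n * (1 / ((n : ℝ) - 1)) * (1 - 1 / ((n : ℝ) - 1)) ^ (n - 1)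
      ≥ 1 - 2 / Real.exp 1 := by
  obtain ⟨m, rfl⟩ : ∃ m, n = m + 1 := ⟨n - 1, by omega⟩
  have hcast : ((m + 1 : ℕ) : ℝ) - 1 = m := by push_cast; ring
  rw [hcast, Nat.add_sub_cancel, ← sub_add_eq_sub_sub, one_sub_inv_pow_succ_add_binomial_term (by omega),
    ge_iff_le, div_eq_mul_inv, ← exp_neg]
  have := one_sub_inv_pow_le_exp_neg_one (m := m) (by omega)
  linarith
end

section
/- Let n ≥ 2 and let X_1, …, X_n be i.i.d. real-valued random variables with P[X_1 ≥ H] ≥ 1/(n-1) and P[X_1 > H] ≤ 1/(n-1), for a real number H. Then the probability that at least two of the X_i are ≥ H is at least 1 - 2/e. -/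
/-!
With `p = P[X ≥ H]` and `m = n - 1`, the number of indices with `X_i ≥ H` is binomial, so fewer
than two of them occur with probability `(1-p)^n + n p (1-p)^(n-1) = (1-p)^m (1 + m p)`. This is
non-increasing in `p ∈ [0, 1]`, hence for `p ≥ 1/m` at most `2 (1 - 1/m)^m ≤ 2/e`.
-/

open MeasureTheory ProbabilityTheory Finset
open scoped Classical

lemma antitoneOn_one_sub_pow_mul_one_add (m : ℕ) :
    AntitoneOn (fun x : ℝ => (1 - x) ^ m * (1 + m * x)) (Set.Icc 0 1) := by
  have hderiv : ∀ x : ℝ, HasDerivAt (fun x : ℝ => (1 - x) ^ m * (1 + m * x))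
      (-(m * (m + 1) * x * (1 - x) ^ (m - 1))) x := by
    intro x
    have h := (((hasDerivAt_id' x).const_sub 1).fun_pow m).fun_mul
      (((hasDerivAt_id' x).const_mul (m : ℝ)).const_add 1)
    refine h.congr_deriv ?_
    rcases Nat.eq_zero_or_pos m with rfl | hm
    · simp
    · obtain ⟨k, rfl⟩ := Nat.exists_eq_add_of_le' hm
      simp only [Nat.add_sub_cancel, Nat.cast_add, Nat.cast_one, pow_succ]
      ring
  refine antitoneOn_of_deriv_nonpos (convex_Icc 0 1)
    (fun x _ => (hderiv x).continuousAt.continuousWithinAt)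
    (fun x _ => (hderiv x).differentiableAt.differentiableWithinAt) fun x hx => ?_
  rw [interior_Icc] at hx
  rw [(hderiv x).deriv, neg_nonpos]
  have : (0 : ℝ) ≤ 1 - x := by linarith [hx.2]
  have := hx.1.le
  positivity

lemma one_sub_pow_mul_one_add_le_two_div_exp {m : ℕ} (hm : 1 ≤ m) {p : ℝ}
    (hp : 1 / (m : ℝ) ≤ p) (hp1 : p ≤ 1) :
    (1 - p) ^ m * (1 + m * p) ≤ 2 / Real.exp 1 := by
  have hm0 : (0 : ℝ) < m := by exact_mod_cast hm
  have hinv : 1 / (m : ℝ) ∈ Set.Icc (0 : ℝ) 1 :=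
    ⟨by positivity, (div_le_one hm0).2 (by exact_mod_cast hm)⟩
  calc (1 - p) ^ m * (1 + m * p)
      ≤ (1 - 1 / m) ^ m * (1 + m * (1 / m)) :=
        antitoneOn_one_sub_pow_mul_one_add m hinv ⟨hinv.1.trans hp, hp1⟩ hp
    _ = (1 - 1 / m) ^ m * 2 := by field_simp; ring
    _ ≤ Real.exp (-1) * 2 := by
        gcongr
        simpa using Real.one_sub_div_pow_le_exp_neg (n := m) (t := 1) (by exact_mod_cast hm)
    _ = 2 / Real.exp 1 := by rw [Real.exp_neg]; ring

section CountingIndependentEvents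

variable {Ω ι β : Type*} [Fintype ι] {X : ι → Ω → β} {P : β → Prop} [DecidablePred P]

lemma setOf_filter_eq_eq_iInter (T : Finset ι) :
    {ω | ({i | P (X i ω)} : Finset ι) = T} =
      ⋂ i, X i ⁻¹' (if i ∈ T then {x | P x} else {x | P x}ᶜ) := by
  ext ω
  simp only [Set.mem_ofPred_eq, Finset.ext_iff, mem_filter, mem_univ, true_and, Set.mem_iInter]
  refine forall_congr' fun i => ?_
  split_ifs with hi <;> simp [hi]

variable [MeasurableSpace Ω] [MeasurableSpace β] {μ : Measure Ω} [IsProbabilityMeasure μ]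

lemma measurableSet_filter_eq (hX : ∀ i, Measurable (X i)) (hP : MeasurableSet {x | P x})
    (T : Finset ι) : MeasurableSet {ω | ({i | P (X i ω)} : Finset ι) = T} := by
  rw [setOf_filter_eq_eq_iInter]
  refine .iInter fun i => hX i ?_
  split_ifs
  exacts [hP, hP.compl]

lemma measurable_card_filter (hX : ∀ i, Measurable (X i)) (hP : MeasurableSet {x | P x}) :
    Measurable fun ω => #{i | P (X i ω)} := by
  simp_rw [card_filter]
  exact Finset.measurable_sum _ fun i _ =>
    Measurable.ite (hX i hP) measurable_const measurable_const

variable {p : ℝ}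

lemma measureReal_filter_eq (hXi : iIndepFun X μ) (hX : ∀ i, Measurable (X i))
    (hP : MeasurableSet {x | P x}) (hp : ∀ i, μ.real (X i ⁻¹' {x | P x}) = p) (T : Finset ι) :
    μ.real {ω | ({i | P (X i ω)} : Finset ι) = T} =
      p ^ #T * (1 - p) ^ (Fintype.card ι - #T) := by
  have hS : ∀ i, MeasurableSet (if i ∈ T then {x | P x} else {x | P x}ᶜ) := fun i => by
    split_ifs
    exacts [hP, hP.compl]
  have hfactor : ∀ i, μ.real (X i ⁻¹' (if i ∈ T then {x | P x} else {x | P x}ᶜ)) =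
      if i ∈ T then p else 1 - p := fun i => by
    split_ifs
    · exact hp i
    · rw [Set.preimage_compl, probReal_compl_eq_one_sub (hX i hP), hp]
  rw [setOf_filter_eq_eq_iInter, measureReal_def,
    hXi.meas_iInter fun i => ⟨_, hS i, rfl⟩, ENNReal.toReal_prod]
  simp_rw [← measureReal_def, hfactor]
  rw [prod_ite, prod_const, prod_const, filter_mem_eq_inter, univ_inter]
  simp [filter_not, card_univ_sdiff]

lemma measureReal_card_filter_eq (hXi : iIndepFun X μ) (hX : ∀ i, Measurable (X i))
    (hP : MeasurableSet {x | P x}) (hp : ∀ i, μ.real (X i ⁻¹' {x | P x}) = p) (k : ℕ) :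
    μ.real {ω | #{i | P (X i ω)} = k} =
      (Fintype.card ι).choose k * p ^ k * (1 - p) ^ (Fintype.card ι - k) := by
  have hunion : {ω | #{i | P (X i ω)} = k} =
      ⋃ T ∈ powersetCard k univ, {ω | ({i | P (X i ω)} : Finset ι) = T} := by
    ext ω
    simp [eq_comm]
  rw [hunion, measureReal_biUnion_finset]
  · rw [sum_congr rfl fun T hT => by
      rw [measureReal_filter_eq hXi hX hP hp T, (mem_powersetCard_univ.1 hT)]]
    rw [sum_const, card_powersetCard, card_univ, nsmul_eq_mul, mul_assoc]
  · intro T _ T' _ hTT'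
    exact Set.disjoint_left.2 fun ω h h' => hTT' (h.symm.trans h')
  · exact fun T _ => measurableSet_filter_eq hX hP T

lemma measureReal_two_le_card_filter (hXi : iIndepFun X μ) (hX : ∀ i, Measurable (X i))
    (hP : MeasurableSet {x | P x}) (hp : ∀ i, μ.real (X i ⁻¹' {x | P x}) = p) :
    μ.real {ω | 2 ≤ #{i | P (X i ω)}} =
      1 - (1 - p) ^ Fintype.card ι - Fintype.card ι * p * (1 - p) ^ (Fintype.card ι - 1) := by
  have hcard := measurable_card_filter hX hP
  have hmeas : ∀ k, MeasurableSet {ω | #{i | P (X i ω)} = k} :=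
    fun k => hcard (measurableSet_singleton k)
  have hcompl : {ω | 2 ≤ #{i | P (X i ω)}} =
      ({ω | #{i | P (X i ω)} = 0} ∪ {ω | #{i | P (X i ω)} = 1})ᶜ := by
    ext ω
    simp only [Set.mem_ofPred_eq, Set.mem_compl_iff, Set.mem_union]
    omega
  rw [hcompl, probReal_compl_eq_one_sub ((hmeas 0).union (hmeas 1)),
    measureReal_union (Set.disjoint_left.2 fun ω h0 h1 => by simp_all) (hmeas 1),
    measureReal_card_filter_eq hXi hX hP hp, measureReal_card_filter_eq hXi hX hP hp]
  simp only [Nat.choose_zero_right, Nat.choose_one_right, pow_zero, pow_one, Nat.cast_one,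
    Nat.sub_zero]
  ring

end CountingIndependentEvents

theorem stmt_7_general {Ω : Type*} [MeasurableSpace Ω] (μ : Measure Ω) [IsProbabilityMeasure μ]
    (n : ℕ) (hn : 2 ≤ n) (X : Fin n → Ω → ℝ) (hmeas : ∀ i, Measurable (X i))
    (hindep : iIndepFun X μ)
    (hident : ∀ i j, μ.map (X i) = μ.map (X j))
    (H : ℝ)
    (hlow : ∀ i, 1 / ((n : ℝ) - 1) ≤ (μ {ω | H ≤ X i ω}).toReal) :
    1 - 2 / Real.exp 1
      ≤ (μ {ω | 2 ≤ (Finset.univ.filter fun i => H ≤ X i ω).card}).toReal := by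
  obtain ⟨m, rfl⟩ : ∃ m, n = m + 1 := ⟨n - 1, by omega⟩
  set p := μ.real {ω | H ≤ X 0 ω}
  have hp : ∀ i, μ.real (X i ⁻¹' {x | H ≤ x}) = p := fun i => by
    have hS : MeasurableSet {x : ℝ | H ≤ x} := measurableSet_Ici
    rw [measureReal_def, ← Measure.map_apply (hmeas i) hS, hident i 0,
      Measure.map_apply (hmeas 0) hS]
    rfl
  have hp_low : 1 / (m : ℝ) ≤ p := by
    convert hlow 0 using 2
    · push_cast
      ring
    · rfl
  have hbound := one_sub_pow_mul_one_add_le_two_div_exp (by omega) hp_low measureReal_le_one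
  change _ ≤ μ.real _
  rw [measureReal_two_le_card_filter hindep hmeas measurableSet_Ici hp, Fintype.card_fin,
    Nat.add_sub_cancel]
  have hexpand : (1 - p) ^ (m + 1) + ((m + 1 : ℕ) : ℝ) * p * (1 - p) ^ m =
      (1 - p) ^ m * (1 + m * p) := by push_cast; ring
  linarith

theorem stmt_7 {Ω : Type*} [MeasurableSpace Ω] (μ : Measure Ω) [IsProbabilityMeasure μ]
    (n : ℕ) (hn : 2 ≤ n) (X : Fin n → Ω → ℝ) (hmeas : ∀ i, Measurable (X i))
    (hindep : iIndepFun X μ)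
    (hident : ∀ i j, μ.map (X i) = μ.map (X j))
    (H : ℝ)
    (hlow : ∀ i, 1 / ((n : ℝ) - 1) ≤ (μ {ω | H ≤ X i ω}).toReal)
    (hups : ∀ i, (μ {ω | H < X i ω}).toReal ≤ 1 / ((n : ℝ) - 1)) :
    1 - 2 / Real.exp 1
      ≤ (μ {ω | 2 ≤ (Finset.univ.filter fun i => H ≤ X i ω).card}).toReal :=
  stmt_7_general μ n hn X hmeas hindep hident H hlow
end
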